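/- arXiv:2304.01278 — 3 statements merged into one kernel-verified Lean document; each statement's English description precedes it below -/
import Mathlib

section
/- For every nondeterministic Büchi automaton A over a finite alphabet Σ, the set of Parikh images Ψ(J(A)) = {Ψ(w) : w ∈ J(A)} ⊆ 𝕄^Σ of its jumping language is a masked semilinear set. -/
open scoped Classical

/-- A (nondeterministic) Büchi automaton over alphabet `A`, with a finite state set. -/
structure BuchiAutomaton (A : Type) : Type 1 where
  Q : Type
  fin : Fintype Q
  step : Q → A → Set Q
  init : Set Q
  accept : Set Q

attribute [instance] BuchiAutomaton.fin

/-- A run of the automaton on an infinite word. -/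
def BuchiAutomaton.IsRun {A : Type} (M : BuchiAutomaton A) (w : ℕ → A) (ρ : ℕ → M.Q) : Prop :=
  ρ 0 ∈ M.init ∧ ∀ i, ρ (i + 1) ∈ M.step (ρ i) (w i)

/-- The language of a Büchi automaton: words admitting a run visiting the accepting set
infinitely often. -/
def BuchiAutomaton.lang {A : Type} (M : BuchiAutomaton A) : Set (ℕ → A) :=
  {w | ∃ ρ, M.IsRun w ρ ∧ ∀ n, ∃ m, n ≤ m ∧ ρ m ∈ M.accept}

/-- A Büchi automaton is deterministic if it has a unique initial state and
every transition set is a singleton. -/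
def BuchiAutomaton.Deterministic {A : Type} (M : BuchiAutomaton A) : Prop :=
  (∃ q, M.init = {q}) ∧ ∀ q a, ∃ p, M.step q a = {p}

/-- Parikh image of an infinite word: number of occurrences of each letter (`⊤` if infinite). -/
noncomputable def parikhInf {A : Type} (w : ℕ → A) : A → ℕ∞ :=
  fun a => {i : ℕ | w i = a}.encard

/-- The jumping language of a Büchi automaton. -/
def JumpLang {A : Type} (M : BuchiAutomaton A) : Set (ℕ → A) :=
  {w | ∃ w', parikhInf w' = parikhInf w ∧ w' ∈ M.lang}

/-- Number of occurrences of letter `a` in the `i`-th window of size `k` of `w`. -/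
noncomputable def winCount {A : Type} (w : ℕ → A) (k i : ℕ) (a : A) : ℕ :=
  {j : ℕ | k * i ≤ j ∧ j < k * i + k ∧ w j = a}.ncard

/-- `w` and `w'` are `k`-window permutations of each other. -/
def KWinPerm {A : Type} (k : ℕ) (w w' : ℕ → A) : Prop :=
  ∀ i a, winCount w k i a = winCount w' k i a

/-- The `k`-window jumping language of a Büchi automaton. -/
def KWinLang {A : Type} (M : BuchiAutomaton A) (k : ℕ) : Set (ℕ → A) :=
  {w | ∃ w', KWinPerm k w' w ∧ w' ∈ M.lang}

/-- The `∃`-window jumping language of a Büchi automaton. -/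
def EWinLang {A : Type} (M : BuchiAutomaton A) : Set (ℕ → A) :=
  {w | ∃ k, 1 ≤ k ∧ ∃ w', KWinPerm k w' w ∧ w' ∈ M.lang}

/-- Linear subsets of `ℕ^A`. -/
def IsLinearSet' {A : Type} (R : Set (A → ℕ)) : Prop :=
  ∃ (b : A → ℕ) (P : Finset (A → ℕ)),
    R = {v | ∃ c : (A → ℕ) → ℕ, v = b + ∑ p ∈ P, c p • p}

/-- Semilinear sets: finite unions of linear sets. -/
def IsSemilinearSet' {A : Type} (R : Set (A → ℕ)) : Prop :=
  ∃ (n : ℕ) (f : Fin n → Set (A → ℕ)), (∀ i, IsLinearSet' (f i)) ∧ R = ⋃ i, f i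

/-- A mask: a vector over `{0,∞}` with at least one `∞` coordinate. -/
def IsMask {A : Type} (m : A → ℕ∞) : Prop :=
  (∀ a, m a = 0 ∨ m a = ⊤) ∧ ∃ a, m a = ⊤

/-- Adding a mask to a vector of naturals. -/
def maskAdd {A : Type} (x : A → ℕ) (m : A → ℕ∞) : A → ℕ∞ :=
  fun a => (x a : ℕ∞) + m a

/-- Adding a mask to a set of vectors, `R + m`. -/
def maskAddSet {A : Type} (R : Set (A → ℕ)) (m : A → ℕ∞) : Set (A → ℕ∞) :=
  (fun x => maskAdd x m) '' R

/-- `𝕄^A`: extended-natural vectors with at least one `∞` coordinate. -/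
def MVecs (A : Type) : Set (A → ℕ∞) := {v | ∃ a, v a = ⊤}

/-- Masked semilinear set: a union `⋃_m (S_m + m)` over all masks `m`, with each `S_m`
semilinear. -/
def IsMaskedSemilinear {A : Type} (S : Set (A → ℕ∞)) : Prop :=
  ∃ F : (A → ℕ∞) → Set (A → ℕ),
    (∀ m, IsMask m → IsSemilinearSet' (F m)) ∧
    S = ⋃ m ∈ {m' : A → ℕ∞ | IsMask m'}, maskAddSet (F m) m

/-- `R` is `m`-oblivious: membership only depends on the `m`-equivalence class. -/
def MOblivious {A : Type} (m : A → ℕ∞) (R : Set (A → ℕ)) : Prop :=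
  ∀ u v : A → ℕ, maskAdd u m = maskAdd v m → (u ∈ R ↔ v ∈ R)

/-- `E_m`: unit vectors at the `∞` coordinates of the mask `m`. -/
noncomputable def maskUnits {A : Type} [Fintype A] [DecidableEq A] (m : A → ℕ∞) :
    Finset (A → ℕ) :=
  (Finset.univ.filter (fun a => m a = ⊤)).image (fun a => Pi.single a 1)

/-- `R` is in canonical `m`-oblivious form. -/
def CanonicalOblivious {A : Type} [Fintype A] [DecidableEq A] (m : A → ℕ∞)
    (R : Set (A → ℕ)) : Prop :=
  ∃ (n : ℕ) (b : Fin n → (A → ℕ)) (P : Fin n → Finset (A → ℕ)),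
    (∀ i a, m a = ⊤ → b i a = 0) ∧
    (∀ i p, p ∈ P i → ∀ a, m a = ⊤ → p a = 0) ∧
    R = ⋃ i, {v | ∃ c : (A → ℕ) → ℕ, v = b i + ∑ p ∈ (P i ∪ maskUnits m), c p • p}


/-!
Jumping does not change Parikh images, so it suffices to treat `Ψ(L(M))`. Let `w ∈ L(M)` have
infinite letters `m`. Past the last finite letter, pick a state `q` that the accepting run visits
infinitely often: `w` splits into a finite stem from an initial state to `q` and an accepting loop
at `q` whose letters are exactly those of `m`. Conversely, any such stem followed by the loop
repeated forever is accepted, with Parikh image `Ψ(stem) + m`. So the `m`-component is the Parikh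
image of the runs from initial states to such states `q`, a regular language. Parikh images of
regular languages are semilinear by state elimination, since `Ψ` turns union, concatenation and
Kleene star into union, sum and additive closure.
-/

open Set Filter Pointwise Computability

section Semilinear

variable {A : Type}

theorem IsLinearSet.isLinearSet' {R : Set (A → ℕ)} (h : IsLinearSet R) : IsLinearSet' R := by
  obtain ⟨b, P, rfl⟩ := isLinearSet_iff.mp h
  refine ⟨b, P, Set.ext fun v => ⟨?_, ?_⟩⟩
  · rintro ⟨x, hx, rfl⟩
    obtain ⟨c, -, rfl⟩ := AddSubmonoid.mem_closure_finset.mp hx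
    exact ⟨c, rfl⟩
  · rintro ⟨c, rfl⟩
    exact vadd_mem_vadd_set <| AddSubmonoid.sum_mem _ fun p hp =>
      AddSubmonoid.nsmul_mem _ (AddSubmonoid.subset_closure hp) _

theorem IsSemilinearSet.isSemilinearSet' {R : Set (A → ℕ)} (h : IsSemilinearSet R) :
    IsSemilinearSet' R := by
  obtain ⟨S, hS, rfl⟩ := isSemilinearSet_iff.mp h
  refine ⟨S.card, fun i => S.equivFin.symm i,
    fun i => (hS _ (S.equivFin.symm i).2).isLinearSet', ?_⟩
  rw [sUnion_eq_iUnion]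
  exact (S.equivFin.symm.surjective.iUnion_comp fun t => (t : Set (A → ℕ))).symm

end Semilinear

noncomputable def parikh {A : Type} (l : List A) : A → ℕ := fun a => l.count a

section Parikh

variable {A : Type}

@[simp] theorem parikh_nil : parikh ([] : List A) = 0 := by
  funext a; simp [parikh]

@[simp] theorem parikh_append (l₁ l₂ : List A) : parikh (l₁ ++ l₂) = parikh l₁ + parikh l₂ := by
  funext a; simp [parikh, List.count_append]

theorem image_parikh_add (L₁ L₂ : Language A) :
    parikh '' (L₁ + L₂ : Language A) = parikh '' L₁ ∪ parikh '' L₂ :=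
  image_union _ _ _

theorem image_parikh_mul (L₁ L₂ : Language A) :
    parikh '' (L₁ * L₂ : Language A) = parikh '' L₁ + parikh '' L₂ := by
  ext x
  constructor
  · rintro ⟨_, huv, rfl⟩
    obtain ⟨u, hu, v, hv, rfl⟩ := Language.mem_mul.mp huv
    exact ⟨_, ⟨u, hu, rfl⟩, _, ⟨v, hv, rfl⟩, (parikh_append u v).symm⟩
  · rintro ⟨_, ⟨u, hu, rfl⟩, _, ⟨v, hv, rfl⟩, rfl⟩
    exact ⟨u ++ v, Language.mem_mul.mpr ⟨u, hu, v, hv, rfl⟩, parikh_append u v⟩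

theorem image_parikh_kstar (L : Language A) :
    parikh '' (L∗ : Language A) = AddSubmonoid.closure (parikh '' L) := by
  apply Subset.antisymm
  · rintro _ ⟨_, hx, rfl⟩
    obtain ⟨Ls, rfl, hLs⟩ := Language.mem_kstar.mp hx
    clear hx
    induction Ls with
    | nil => simp
    | cons y Ls ih =>
      rw [List.flatten_cons, parikh_append]
      exact add_mem (AddSubmonoid.subset_closure (mem_image_of_mem _ (hLs y (by simp))))
        (ih fun z hz => hLs z (by simp [hz]))
  · intro x hx
    induction hx using AddSubmonoid.closure_induction with
    | mem x hx =>
      obtain ⟨y, hy, rfl⟩ := hx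
      refine ⟨[y].flatten, Language.join_mem_kstar fun z hz => ?_, by simp⟩
      rw [List.mem_singleton.mp hz]
      exact hy
    | zero => exact ⟨[], Language.nil_mem_kstar L, parikh_nil⟩
    | add x y _ _ hx hy =>
      obtain ⟨u, hu, rfl⟩ := hx
      obtain ⟨v, hv, rfl⟩ := hy
      obtain ⟨Lu, rfl, hLu⟩ := Language.mem_kstar.mp hu
      obtain ⟨Lv, rfl, hLv⟩ := Language.mem_kstar.mp hv
      refine ⟨(Lu ++ Lv).flatten, Language.join_mem_kstar ?_, by simp⟩
      simpa [or_imp, forall_and] using ⟨hLu, hLv⟩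

end Parikh

namespace BuchiAutomaton

variable {A : Type} (M : BuchiAutomaton A)

def FinRun : M.Q → List A → M.Q → Prop
  | p, [], q => p = q
  | p, a :: l, q => ∃ r ∈ M.step p a, FinRun r l q

/-- Runs from `p` to `q` whose intermediate states (all but the first and last) lie in `S`. -/
inductive Walk (S : Set M.Q) : M.Q → List A → M.Q → Prop
  | nil (p : M.Q) : Walk S p [] p
  | single {p q : M.Q} {a : A} : q ∈ M.step p a → Walk S p [a] q
  | cons {p r q : M.Q} {a : A} {l : List A} :
      r ∈ M.step p a → r ∈ S → Walk S r l q → Walk S p (a :: l) q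

def walkLang (S : Set M.Q) (p q : M.Q) : Language A := {l | M.Walk S p l q}

variable {M}

@[simp] theorem finRun_nil {p q : M.Q} : M.FinRun p [] q ↔ p = q := Iff.rfl

@[simp] theorem finRun_cons {p q : M.Q} {a : A} {l : List A} :
    M.FinRun p (a :: l) q ↔ ∃ r ∈ M.step p a, M.FinRun r l q := Iff.rfl

theorem walk_univ_iff_finRun {p q : M.Q} {l : List A} : M.Walk univ p l q ↔ M.FinRun p l q := by
  constructor
  · intro h
    induction h with
    | nil p => rfl
    | single h => exact ⟨_, h, rfl⟩
    | cons h _ _ ih => exact ⟨_, h, ih⟩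
  · intro h
    induction l generalizing p with
    | nil => rw [finRun_nil.mp h]; exact Walk.nil _
    | cons a l ih =>
      obtain ⟨r, hr, h⟩ := h
      exact Walk.cons hr (mem_univ r) (ih h)

theorem Walk.mono {S T : Set M.Q} (hST : S ⊆ T) {p q : M.Q} {l : List A} (h : M.Walk S p l q) :
    M.Walk T p l q := by
  induction h with
  | nil p => exact Walk.nil p
  | single h => exact Walk.single h
  | cons h hS _ ih => exact Walk.cons h (hST hS) ih

theorem Walk.append {S : Set M.Q} {p r q : M.Q} {l₁ l₂ : List A} (h₁ : M.Walk S p l₁ r)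
    (hr : r ∈ S) (h₂ : M.Walk S r l₂ q) : M.Walk S p (l₁ ++ l₂) q := by
  induction h₁ with
  | nil => exact h₂
  | single h => exact Walk.cons h hr h₂
  | cons h hS _ ih => exact Walk.cons h hS (ih hr h₂)

theorem finite_walkLang_empty [Finite A] (p q : M.Q) :
    (M.walkLang ∅ p q : Set (List A)).Finite := by
  refine (List.finite_length_le A 1).subset ?_
  rintro _ (_ | _ | ⟨_, ⟨⟩, _⟩) <;> simp

theorem kstar_walkLang_le (S : Set M.Q) (r : M.Q) :
    (M.walkLang S r r)∗ ≤ M.walkLang (insert r S) r r := by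
  intro l hl
  obtain ⟨Ls, rfl, hLs⟩ := Language.mem_kstar.mp hl
  clear hl
  induction Ls with
  | nil => exact Walk.nil r
  | cons y Ls ih =>
    exact ((hLs y (by simp)).mono (subset_insert r S)).append (mem_insert r S)
      (ih fun z hz => hLs z (by simp [hz]))

theorem walkLang_insert_le (S : Set M.Q) (r p q : M.Q) :
    M.walkLang (insert r S) p q ≤
      M.walkLang S p q + M.walkLang S p r * (M.walkLang S r r)∗ * M.walkLang S r q := by
  intro l hl
  induction hl with
  | nil p => exact Or.inl (Walk.nil p)
  | single h => exact Or.inl (Walk.single h)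
  | @cons p s q a l h hs _ ih =>
    rcases hs with rfl | hs
    · rcases ih with ih | ih
      · exact Or.inr (Language.mem_mul.mpr ⟨[a], Language.mem_mul.mpr
          ⟨[a], Walk.single h, [], Language.nil_mem_kstar _, rfl⟩, l, ih, rfl⟩)
      · obtain ⟨_, hl₁₂, l₃, hl₃, rfl⟩ := Language.mem_mul.mp ih
        obtain ⟨l₁, hl₁, l₂, hl₂, rfl⟩ := Language.mem_mul.mp hl₁₂
        obtain ⟨Ls, rfl, hLs⟩ := Language.mem_kstar.mp hl₂
        refine Or.inr (Language.mem_mul.mpr ⟨[a] ++ (l₁ :: Ls).flatten, Language.mem_mul.mpr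
          ⟨[a], Walk.single h, _, Language.join_mem_kstar ?_, rfl⟩, l₃, hl₃, by simp⟩)
        simpa [or_imp, forall_and] using ⟨hl₁, hLs⟩
    · rcases ih with ih | ih
      · exact Or.inl (Walk.cons h hs ih)
      · obtain ⟨_, hl₁₂, l₃, hl₃, rfl⟩ := Language.mem_mul.mp ih
        obtain ⟨l₁, hl₁, l₂, hl₂, rfl⟩ := Language.mem_mul.mp hl₁₂
        exact Or.inr (Language.mem_mul.mpr ⟨a :: l₁ ++ l₂, Language.mem_mul.mpr
          ⟨a :: l₁, Walk.cons h hs hl₁, l₂, hl₂, rfl⟩, l₃, hl₃, rfl⟩)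

/-- State elimination: cut a walk through `insert r S` at its first and last visits to `r`. -/
theorem walkLang_insert (S : Set M.Q) (r p q : M.Q) :
    M.walkLang (insert r S) p q =
      M.walkLang S p q + M.walkLang S p r * (M.walkLang S r r)∗ * M.walkLang S r q := by
  refine le_antisymm (walkLang_insert_le S r p q) ?_
  rintro l (hl | hl)
  · exact Walk.mono (subset_insert r S) hl
  · obtain ⟨_, hl₁₂, l₃, hl₃, rfl⟩ := Language.mem_mul.mp hl
    obtain ⟨l₁, hl₁, l₂, hl₂, rfl⟩ := Language.mem_mul.mp hl₁₂
    exact ((hl₁.mono (subset_insert r S)).append (mem_insert r S)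
      (kstar_walkLang_le S r hl₂)).append (mem_insert r S) (hl₃.mono (subset_insert r S))

variable [Finite A]

theorem isSemilinearSet_parikh_walkLang (S : Finset M.Q) (p q : M.Q) :
    IsSemilinearSet (parikh '' M.walkLang S p q) := by
  induction S using Finset.induction_on generalizing p q with
  | empty =>
    rw [Finset.coe_empty]
    exact IsSemilinearSet.of_finite ((finite_walkLang_empty p q).image _)
  | @insert r S _ ih =>
    rw [Finset.coe_insert, walkLang_insert, image_parikh_add, image_parikh_mul, image_parikh_mul,
      image_parikh_kstar]
    exact (ih p q).union (((ih p r).add (ih r r).closure).add (ih r q))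

theorem isSemilinearSet_parikh_finRun (p q : M.Q) :
    IsSemilinearSet (parikh '' {l | M.FinRun p l q}) := by
  simpa [walkLang, walk_univ_iff_finRun] using isSemilinearSet_parikh_walkLang Finset.univ p q

end BuchiAutomaton

section InfiniteWords

variable {A : Type}

theorem parikhInf_cons (b : A) (s : Stream' A) (a : A) :
    parikhInf (Stream'.cons b s) a = parikh [b] a + parikhInf s a := by
  have hsplit : {i | Stream'.cons b s i = a} = {i | i = 0 ∧ b = a} ∪ Nat.succ '' {i | s i = a} := by
    ext (_ | i) <;> simp [Stream'.cons]
  unfold parikhInf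
  rw [hsplit, encard_union_eq, Nat.succ_injective.encard_image]
  · by_cases hb : b = a <;> simp [parikh, hb]
  · exact disjoint_left.mpr fun i hi ⟨j, _, hj⟩ => Nat.succ_ne_zero j (hj.trans hi.1)

theorem parikhInf_append_stream (u : List A) (s : Stream' A) (a : A) :
    parikhInf (u ++ₛ s) a = parikh u a + parikhInf s a := by
  induction u with
  | nil => simp
  | cons b u ih =>
    rw [Stream'.cons_append_stream, parikhInf_cons, ih, ← add_assoc, ← Nat.cast_add,
      ← Pi.add_apply, ← parikh_append, List.singleton_append]

theorem parikhInf_periodic {v : ℕ → A} {L : ℕ} (hL : 0 < L) (a : A) :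
    parikhInf (fun i => v (i % L)) a = if ∃ k < L, v k = a then ⊤ else 0 := by
  split_ifs with h
  · obtain ⟨k, hk, rfl⟩ := h
    refine encard_eq_top_iff.mpr (infinite_of_injective_forall_mem (f := fun n => k + n * L)
      (fun n n' h => Nat.eq_of_mul_eq_mul_right hL (by simpa using h)) fun n => ?_)
    simp [Nat.add_mul_mod_self_right, Nat.mod_eq_of_lt hk]
  · push Not at h
    exact encard_eq_zero.mpr (eq_empty_of_forall_notMem fun i => h _ (Nat.mod_lt i hL))

end InfiniteWords

namespace BuchiAutomaton

variable {A : Type} {M : BuchiAutomaton A}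

variable (M) in
def AcceptsFrom (q : M.Q) (w : ℕ → A) : Prop :=
  ∃ ρ : ℕ → M.Q, ρ 0 = q ∧ (∀ i, ρ (i + 1) ∈ M.step (ρ i) (w i)) ∧ ∃ᶠ i in atTop, ρ i ∈ M.accept

theorem mem_lang_of_acceptsFrom {q : M.Q} {w : ℕ → A} (hq : q ∈ M.init) (h : M.AcceptsFrom q w) :
    w ∈ M.lang := by
  obtain ⟨ρ, rfl, hstep, hacc⟩ := h
  exact ⟨ρ, ⟨hq, hstep⟩, frequently_atTop.mp hacc⟩

theorem AcceptsFrom.cons {p r : M.Q} {a : A} {s : Stream' A} (hr : r ∈ M.step p a)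
    (h : M.AcceptsFrom r s) : M.AcceptsFrom p (Stream'.cons a s) := by
  obtain ⟨ρ, rfl, hstep, hacc⟩ := h
  refine ⟨Stream'.cons p ρ, rfl, fun i => ?_, ?_⟩
  · cases i with
    | zero => exact hr
    | succ i => exact hstep i
  · exact (tendsto_add_atTop_nat 1).frequently hacc

theorem AcceptsFrom.append_stream {p q : M.Q} {u : List A} {s : Stream' A}
    (hu : M.FinRun p u q) (h : M.AcceptsFrom q s) : M.AcceptsFrom p (u ++ₛ s) := by
  induction u generalizing p with
  | nil => rwa [finRun_nil.mp hu]
  | cons a u ih =>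
    obtain ⟨r, hr, hu⟩ := hu
    rw [Stream'.cons_append_stream]
    exact (ih hu).cons hr

theorem acceptsFrom_periodic {v : ℕ → A} {σ : ℕ → M.Q} {L : ℕ} (hσL : σ L = σ 0)
    (hstep : ∀ k < L, σ (k + 1) ∈ M.step (σ k) (v k)) (hacc : ∃ k < L, σ k ∈ M.accept) :
    M.AcceptsFrom (σ 0) (fun i => v (i % L)) := by
  obtain ⟨j, hj, hσj⟩ := hacc
  have hL : 0 < L := by omega
  refine ⟨fun i => σ (i % L), by simp, fun i => ?_, frequently_atTop.mpr fun n => ?_⟩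
  · have hi := Nat.mod_lt i hL
    have hsucc : (i % L + 1) % L = (i + 1) % L := (Nat.mod_modEq i L).add_right 1
    show σ ((i + 1) % L) ∈ M.step (σ (i % L)) (v (i % L))
    rw [← hsucc]
    rcases (Nat.add_one_le_of_lt hi).lt_or_eq with hlt | heq
    · rw [Nat.mod_eq_of_lt hlt]
      exact hstep _ hi
    · simpa only [heq, Nat.mod_self, hσL] using hstep _ hi
  · refine ⟨j + n * L, le_add_left (Nat.le_mul_of_pos_right n hL), ?_⟩
    simpa [Nat.add_mul_mod_self_right, Nat.mod_eq_of_lt hj] using hσj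

theorem finRun_take {w : ℕ → A} {ρ : ℕ → M.Q} (hstep : ∀ i, ρ (i + 1) ∈ M.step (ρ i) (w i))
    (n : ℕ) : M.FinRun (ρ 0) (Stream'.take n w) (ρ n) := by
  induction n generalizing w ρ with
  | zero => rfl
  | succ n ih =>
    exact ⟨ρ 1, hstep 0, ih (w := Stream'.tail w) (ρ := Stream'.tail ρ) fun i => hstep (i + 1)⟩

end BuchiAutomaton

section Masks

variable {A : Type}

noncomputable def infMask (x : A → ℕ∞) : A → ℕ∞ := fun a => if x a = ⊤ then ⊤ else 0

theorem infMask_eq_top {x : A → ℕ∞} {a : A} : infMask x a = ⊤ ↔ x a = ⊤ := by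
  unfold infMask
  split_ifs with h <;> simp [h]

theorem isMask_infMask_parikhInf [Finite A] (w : ℕ → A) : IsMask (infMask (parikhInf w)) := by
  refine ⟨fun a => ?_, ?_⟩
  · unfold infMask
    split_ifs <;> simp
  · obtain ⟨a, ha⟩ := Finite.exists_infinite_fiber w
    exact ⟨a, infMask_eq_top.mpr (encard_eq_top_iff.mpr (infinite_coe_iff.mp ha))⟩

theorem eventually_infMask_parikhInf_eq_top [Finite A] (w : ℕ → A) :
    ∀ᶠ i in atTop, infMask (parikhInf w) (w i) = ⊤ := by
  have h : ∀ᶠ i in atTop, ∀ a, w i = a → infMask (parikhInf w) a = ⊤ := by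
    refine eventually_all.mpr fun a => ?_
    by_cases ha : parikhInf w a = ⊤
    · exact Eventually.of_forall fun _ _ => infMask_eq_top.mpr ha
    · have hfin : {i | w i = a}.Finite := not_infinite.mp (mt encard_eq_top_iff.mpr ha)
      rw [← Nat.cofinite_eq_atTop]
      exact hfin.eventually_cofinite_notMem.mono fun i hi h => absurd h hi
  exact h.mono fun i hi => hi (w i) rfl

end Masks

theorem image_parikhInf_jumpLang {A : Type} (M : BuchiAutomaton A) :
    parikhInf '' JumpLang M = parikhInf '' M.lang := by
  apply Subset.antisymm
  · rintro _ ⟨w, ⟨w', hw', hl⟩, rfl⟩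
    exact ⟨w', hl, hw'⟩
  · rintro _ ⟨w, hw, rfl⟩
    exact ⟨w, ⟨w, rfl, hw⟩, rfl⟩

namespace BuchiAutomaton

variable {A : Type} {M : BuchiAutomaton A}

variable (M) in
/-- `q` lies on an accepting loop whose letters are exactly the infinite coordinates of `m`. -/
def HasMaskLoop (m : A → ℕ∞) (q : M.Q) : Prop :=
  ∃ (v : ℕ → A) (σ : ℕ → M.Q) (L : ℕ), σ 0 = q ∧ σ L = q ∧
    (∀ k < L, σ (k + 1) ∈ M.step (σ k) (v k)) ∧ (∃ k < L, σ k ∈ M.accept) ∧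
    ∀ a, (∃ k < L, v k = a) ↔ m a = ⊤

variable (M) in
/-- The component `S_m` of the masked decomposition of `Ψ(L(M))`. -/
def stemParikh (m : A → ℕ∞) : Set (A → ℕ) :=
  ⋃ q₀ ∈ M.init, ⋃ q ∈ {q | M.HasMaskLoop m q}, parikh '' {u | M.FinRun q₀ u q}

theorem isSemilinearSet_stemParikh [Finite A] (m : A → ℕ∞) : IsSemilinearSet (M.stemParikh m) :=
  .biUnion (toFinite _) fun q₀ _ => .biUnion (toFinite _) fun q _ =>
    isSemilinearSet_parikh_finRun q₀ q

theorem hasMaskLoop_of_run [Finite A] {w : ℕ → A} {ρ : ℕ → M.Q} {m : A → ℕ∞} {i₀ : ℕ}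
    (hstep : ∀ i, ρ (i + 1) ∈ M.step (ρ i) (w i)) (hacc : ∃ᶠ i in atTop, ρ i ∈ M.accept)
    (hret : ∃ᶠ i in atTop, ρ i = ρ i₀) (hafter : ∀ i ≥ i₀, m (w i) = ⊤)
    (hinf : ∀ a, m a = ⊤ → ∃ᶠ i in atTop, w i = a) : M.HasMaskLoop m (ρ i₀) := by
  have hK : ∀ᶠ K in atTop, ∀ a, m a = ⊤ → ∃ k, i₀ ≤ k ∧ k < K ∧ w k = a := by
    refine eventually_all.mpr fun a => ?_
    by_cases ha : m a = ⊤
    · obtain ⟨k, hk, hwk⟩ := (hinf a ha).forall_exists_of_atTop i₀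
      exact (eventually_gt_atTop k).mono fun K hK _ => ⟨k, hk, hK, hwk⟩
    · exact Eventually.of_forall fun _ h => absurd h ha
  obtain ⟨K, hK⟩ := hK.exists
  obtain ⟨j, hj, hρj⟩ := hacc.forall_exists_of_atTop (max K i₀)
  obtain ⟨i₁, hi₁, hρi₁⟩ := hret.forall_exists_of_atTop (j + 1)
  refine ⟨fun k => w (i₀ + k), fun k => ρ (i₀ + k), i₁ - i₀, rfl, ?_, fun k _ => hstep (i₀ + k),
    ⟨j - i₀, by omega, ?_⟩, fun a => ⟨?_, fun ha => ?_⟩⟩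
  · dsimp only
    rwa [Nat.add_sub_cancel' (by omega)]
  · dsimp only
    rwa [Nat.add_sub_cancel' (by omega)]
  · rintro ⟨k, -, rfl⟩
    exact hafter _ (by omega)
  · obtain ⟨k, hk₀, hkK, hwk⟩ := hK a ha
    exact ⟨k - i₀, by omega, by dsimp only; rwa [Nat.add_sub_cancel' hk₀]⟩

theorem maskAddSet_stemParikh_subset {m : A → ℕ∞} (hm : ∀ a, m a = 0 ∨ m a = ⊤) :
    maskAddSet (M.stemParikh m) m ⊆ parikhInf '' M.lang := by
  rintro _ ⟨_, hx, rfl⟩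
  simp only [stemParikh, mem_iUnion, mem_ofPred_eq] at hx
  obtain ⟨q₀, hq₀, q, ⟨v, σ, L, rfl, hσL, hstep, hacc, hletters⟩, u, hu, rfl⟩ := hx
  have hL : 0 < L := by obtain ⟨k, hk, -⟩ := hacc; omega
  refine ⟨u ++ₛ fun i => v (i % L), mem_lang_of_acceptsFrom hq₀
    ((acceptsFrom_periodic hσL hstep hacc).append_stream hu), funext fun a => ?_⟩
  rw [parikhInf_append_stream u (fun i => v (i % L)), parikhInf_periodic hL]
  change _ = (parikh u a : ℕ∞) + m a
  by_cases ha : m a = ⊤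
  · rw [if_pos ((hletters a).mpr ha), ha]
  · rw [if_neg (mt (hletters a).mp ha), (hm a).resolve_right ha]

theorem parikhInf_mem_maskAddSet [Finite A] {w : ℕ → A} (hw : w ∈ M.lang) :
    parikhInf w ∈ maskAddSet (M.stemParikh (infMask (parikhInf w))) (infMask (parikhInf w)) := by
  set m := infMask (parikhInf w)
  obtain ⟨ρ, ⟨hρ0, hstep⟩, hacc⟩ := hw
  obtain ⟨q, hq⟩ := Finite.exists_infinite_fiber ρ
  have hret : ∃ᶠ i in atTop, ρ i = q :=
    Nat.frequently_atTop_iff_infinite.mpr (infinite_coe_iff.mp hq)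
  obtain ⟨i₀, hafter, rfl⟩ : ∃ i₀, (∀ i ≥ i₀, m (w i) = ⊤) ∧ ρ i₀ = q := by
    obtain ⟨N, hN⟩ := eventually_atTop.mp (eventually_infMask_parikhInf_eq_top w)
    obtain ⟨i₀, hi₀, hρi₀⟩ := hret.forall_exists_of_atTop N
    exact ⟨i₀, fun i hi => hN i (by omega), hρi₀⟩
  have hinf : ∀ a, m a = ⊤ → ∃ᶠ i in atTop, w i = a := fun a ha =>
    Nat.frequently_atTop_iff_infinite.mpr (encard_eq_top_iff.mp (infMask_eq_top.mp ha))
  have hloop := hasMaskLoop_of_run hstep (frequently_atTop.mpr hacc) hret hafter hinf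
  refine ⟨parikh (Stream'.take i₀ w),
    mem_biUnion hρ0 (mem_biUnion hloop ⟨_, finRun_take hstep i₀, rfl⟩), funext fun a => ?_⟩
  by_cases ha : parikhInf w a = ⊤
  · simp [maskAdd, m, infMask, ha]
  · have htail : parikhInf (Stream'.drop i₀ w) a = 0 := by
      refine encard_eq_zero.mpr (eq_empty_of_forall_notMem fun i hi => ha ?_)
      rw [← infMask_eq_top, ← hi.out]
      exact hafter _ (Nat.le_add_left i₀ i)
    conv_rhs => rw [← Stream'.append_take_drop i₀ w, parikhInf_append_stream, htail, add_zero]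
    simp [maskAdd, m, infMask, ha]

end BuchiAutomaton

open BuchiAutomaton in
/-- The Parikh image of the jumping language of a Büchi automaton is a
masked semilinear set. -/
theorem parikh_jumpLang_maskedSemilinear (A : Type) [Fintype A] (M : BuchiAutomaton A) :
    IsMaskedSemilinear (parikhInf '' JumpLang M) := by
  refine ⟨M.stemParikh, fun m _ => (isSemilinearSet_stemParikh m).isSemilinearSet', ?_⟩
  rw [image_parikhInf_jumpLang]
  refine Subset.antisymm ?_ (iUnion₂_subset fun m hm => maskAddSet_stemParikh_subset hm.1)
  rintro _ ⟨w, hw, rfl⟩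
  exact mem_biUnion (isMask_infMask_parikhInf w) (parikhInf_mem_maskAddSet hw)
end

section
/- For every nondeterministic Büchi automaton A over a finite alphabet Σ and every k ≥ 1, there exists a nondeterministic Büchi automaton B_k over Σ such that L(B_k) = J_k⊞(A); moreover, if A has n states, B_k can be taken with at most k^{|Σ|}·n + n states. -/
open scoped Classical

/-!
A word lies in the `k`-window jumping language iff `M` has a run that reads, window by window,
some permutation of each window of the word. The recognizing automaton reads a window while
remembering the multiset of letters seen so far in it (fewer than `k` letters, so at most
`k ^ |A|` possibilities) and the state of `M` where the window began. On the window's last letter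
it guesses a state that `M` reaches by reading some permutation of the window, entering the
accepting copy of that state iff the guessed run of `M` can visit an accepting state.
-/

open Multiset

variable {A : Type}

def prefixMultiset (u : ℕ → A) (n : ℕ) : Multiset A := (range n).map u

def windowMultiset (k : ℕ) (w : ℕ → A) (i : ℕ) : Multiset A :=
  prefixMultiset (fun j => w (k * i + j)) k

@[simp] lemma prefixMultiset_zero (u : ℕ → A) : prefixMultiset u 0 = 0 := rfl

lemma prefixMultiset_succ (u : ℕ → A) (n : ℕ) :
    prefixMultiset u (n + 1) = u n ::ₘ prefixMultiset u n := by
  simp [prefixMultiset, range_succ]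

@[simp] lemma card_prefixMultiset (u : ℕ → A) (n : ℕ) : card (prefixMultiset u n) = n := by
  simp [prefixMultiset]

@[simp] lemma card_windowMultiset (k : ℕ) (w : ℕ → A) (i : ℕ) :
    card (windowMultiset k w i) = k :=
  card_prefixMultiset _ _

lemma prefixMultiset_congr {u v : ℕ → A} {n : ℕ} (h : ∀ j < n, u j = v j) :
    prefixMultiset u n = prefixMultiset v n :=
  map_congr rfl fun j hj => h j (mem_range.1 hj)

lemma winCount_eq_count (w : ℕ → A) (k i : ℕ) (a : A) :
    winCount w k i a = count a (windowMultiset k w i) := by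
  have hshift : {j : ℕ | k * i ≤ j ∧ j < k * i + k ∧ w j = a} =
      (((Finset.range k).filter fun j => w (k * i + j) = a).map (addLeftEmbedding (k * i)) :
        Set ℕ) := by
    ext j
    simp only [Set.mem_ofPred_eq, Finset.coe_map, Finset.coe_filter, Set.mem_image]
    constructor
    · rintro ⟨hlo, hhi, hj⟩
      have hsub : k * i + (j - k * i) = j := by omega
      exact ⟨j - k * i, ⟨Finset.mem_range.2 (by omega), by rwa [hsub]⟩, by simpa using hsub⟩
    · rintro ⟨j, hj, rfl⟩
      simp only [Finset.mem_range, addLeftEmbedding_apply, le_add_iff_nonneg_right,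
        _root_.zero_le, add_lt_add_iff_left, true_and] at hj ⊢
      omega
  rw [winCount, hshift, Set.ncard_coe_finset, Finset.card_map, windowMultiset, prefixMultiset,
    count_map]
  simp [Finset.card, Finset.filter_val, eq_comm]

lemma kWinPerm_iff {k : ℕ} {w w' : ℕ → A} :
    KWinPerm k w w' ↔ ∀ i, windowMultiset k w i = windowMultiset k w' i := by
  simp only [KWinPerm, winCount_eq_count, Multiset.ext]

def concatBlocks {α : Type} (k : ℕ) (f : ℕ → ℕ → α) (t : ℕ) : α := f (t / k) (t % k)

lemma concatBlocks_mul_add {α : Type} {k j : ℕ} (f : ℕ → ℕ → α) (i : ℕ) (hj : j < k) :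
    concatBlocks k f (k * i + j) = f i j := by
  have hk : 0 < k := by omega
  simp [concatBlocks, Nat.mul_add_div hk, Nat.div_eq_of_lt hj, Nat.mod_eq_of_lt hj]

namespace BuchiAutomaton

variable (M : BuchiAutomaton A)

def IsPath (u : ℕ → A) (n : ℕ) (p : ℕ → M.Q) : Prop :=
  ∀ j < n, p (j + 1) ∈ M.step (p j) (u j)

def Reads (u : ℕ → A) (n : ℕ) (q q' : M.Q) : Prop :=
  ∃ p, M.IsPath u n p ∧ p 0 = q ∧ p n = q'

/-- The start state does not count as a visit, so each visit belongs to exactly one block. -/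
def ReadsAcc (u : ℕ → A) (n : ℕ) (q q' : M.Q) : Prop :=
  ∃ p, M.IsPath u n p ∧ p 0 = q ∧ p n = q' ∧ ∃ j < n, p (j + 1) ∈ M.accept

def ReadsPerm (x : Multiset A) (q q' : M.Q) : Prop :=
  ∃ u, prefixMultiset u (card x) = x ∧ M.Reads u (card x) q q'

def ReadsPermAcc (x : Multiset A) (q q' : M.Q) : Prop :=
  ∃ u, prefixMultiset u (card x) = x ∧ M.ReadsAcc u (card x) q q'

def AcceptsPermuted (X : ℕ → Multiset A) : Prop :=
  ∃ qs : ℕ → M.Q, qs 0 ∈ M.init ∧ (∀ i, M.ReadsPerm (X i) (qs i) (qs (i + 1))) ∧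
    ∀ n, ∃ i, n ≤ i ∧ M.ReadsPermAcc (X i) (qs i) (qs (i + 1))

variable {M}

lemma IsPath.congr {u v : ℕ → A} {n : ℕ} {p : ℕ → M.Q} (hp : M.IsPath u n p)
    (h : ∀ j < n, u j = v j) : M.IsPath v n p :=
  fun j hj => h j hj ▸ hp j hj

lemma Reads.congr {u v : ℕ → A} {n : ℕ} {q q' : M.Q} (hr : M.Reads u n q q')
    (h : ∀ j < n, u j = v j) : M.Reads v n q q' :=
  let ⟨p, hp, h0, hn⟩ := hr; ⟨p, hp.congr h, h0, hn⟩

lemma ReadsAcc.congr {u v : ℕ → A} {n : ℕ} {q q' : M.Q} (hr : M.ReadsAcc u n q q')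
    (h : ∀ j < n, u j = v j) : M.ReadsAcc v n q q' :=
  let ⟨p, hp, h0, hn, hacc⟩ := hr; ⟨p, hp.congr h, h0, hn, hacc⟩

lemma ReadsAcc.reads {u : ℕ → A} {n : ℕ} {q q' : M.Q} (hr : M.ReadsAcc u n q q') :
    M.Reads u n q q' :=
  let ⟨p, hp, h0, hn, _⟩ := hr; ⟨p, hp, h0, hn⟩

lemma Reads.exists_path_visiting_if_readsAcc {u : ℕ → A} {n : ℕ} {q q' : M.Q}
    (hr : M.Reads u n q q') : ∃ p, M.IsPath u n p ∧ p 0 = q ∧ p n = q' ∧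
      (M.ReadsAcc u n q q' → ∃ j < n, p (j + 1) ∈ M.accept) := by
  by_cases hacc : M.ReadsAcc u n q q'
  · obtain ⟨p, hp, h0, hn, hj⟩ := hacc
    exact ⟨p, hp, h0, hn, fun _ => hj⟩
  · obtain ⟨p, hp, h0, hn⟩ := hr
    exact ⟨p, hp, h0, hn, fun h => absurd h hacc⟩

lemma exists_blocks_of_mem_lang {w : ℕ → A} {k : ℕ} (hk : 0 < k) (hw : w ∈ M.lang) :
    ∃ qs : ℕ → M.Q, qs 0 ∈ M.init ∧
      (∀ i, M.Reads (fun j => w (k * i + j)) k (qs i) (qs (i + 1))) ∧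
      ∀ n, ∃ i, n ≤ i ∧ M.ReadsAcc (fun j => w (k * i + j)) k (qs i) (qs (i + 1)) := by
  obtain ⟨ρ, ⟨hinit, hstep⟩, hacc⟩ := hw
  have hpath : ∀ i, M.IsPath (fun j => w (k * i + j)) k (fun j => ρ (k * i + j)) :=
    fun i j _ => hstep (k * i + j)
  have hend : ∀ i, ρ (k * i + k) = ρ (k * (i + 1)) := fun i => by rw [Nat.mul_succ]
  refine ⟨fun i => ρ (k * i), hinit, fun i => ⟨_, hpath i, rfl, hend i⟩, fun n => ?_⟩
  obtain ⟨m, hnm, hm⟩ := hacc (k * n + 1)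
  have hdecomp : k * ((m - 1) / k) + (m - 1) % k + 1 = m := by
    have := Nat.div_add_mod (m - 1) k; omega
  refine ⟨(m - 1) / k, ?_, _, hpath _, rfl, hend _, (m - 1) % k, Nat.mod_lt _ hk, ?_⟩
  · exact (Nat.le_div_iff_mul_le hk).2 (by rw [mul_comm]; omega)
  · rwa [← add_assoc, hdecomp]

lemma mem_lang_of_blocks {w : ℕ → A} {k : ℕ} (hk : 0 < k) (qs : ℕ → M.Q)
    (hinit : qs 0 ∈ M.init)
    (hreads : ∀ i, M.Reads (fun j => w (k * i + j)) k (qs i) (qs (i + 1)))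
    (hacc : ∀ n, ∃ i, n ≤ i ∧ M.ReadsAcc (fun j => w (k * i + j)) k (qs i) (qs (i + 1))) :
    w ∈ M.lang := by
  choose ps hpath hstart hend hvisit using fun i => (hreads i).exists_path_visiting_if_readsAcc
  have hρ : ∀ i j, j ≤ k → concatBlocks k ps (k * i + j) = ps i j := by
    intro i j hj
    rcases hj.lt_or_eq with hj | hj
    · exact concatBlocks_mul_add ps i hj
    · rw [hj, ← Nat.mul_succ, ← add_zero (k * (i + 1)), concatBlocks_mul_add ps _ hk, hstart,
        hend]
  refine ⟨concatBlocks k ps, ⟨?_, fun t => ?_⟩, fun n => ?_⟩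
  · simpa [concatBlocks, hstart] using hinit
  · have hlt := Nat.mod_lt t hk
    have e : k * (t / k) + (t % k + 1) = t + 1 := by have := Nat.div_add_mod t k; omega
    have hstep := hpath (t / k) (t % k) hlt
    beta_reduce at hstep
    rwa [← hρ _ _ hlt.le, ← hρ _ (t % k + 1) hlt, e, Nat.div_add_mod] at hstep
  · obtain ⟨i, hni, hi⟩ := hacc n
    obtain ⟨j, hj, hacc⟩ := hvisit i hi
    refine ⟨k * i + (j + 1), ?_, by rwa [hρ i _ hj]⟩
    exact le_add_right (hni.trans (Nat.le_mul_of_pos_left i hk))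

lemma ReadsPerm.exists_word_visiting_if_readsPermAcc {x : Multiset A} {q q' : M.Q}
    (hr : M.ReadsPerm x q q') : ∃ u, prefixMultiset u (card x) = x ∧ M.Reads u (card x) q q' ∧
      (M.ReadsPermAcc x q q' → M.ReadsAcc u (card x) q q') := by
  by_cases hacc : M.ReadsPermAcc x q q'
  · obtain ⟨u, hu, hr⟩ := hacc
    exact ⟨u, hu, hr.reads, fun _ => hr⟩
  · obtain ⟨u, hu, hr⟩ := hr
    exact ⟨u, hu, hr, fun h => absurd h hacc⟩

theorem mem_kWinLang_iff {k : ℕ} (hk : 0 < k) {w : ℕ → A} :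
    w ∈ KWinLang M k ↔ M.AcceptsPermuted (windowMultiset k w) := by
  constructor
  · rintro ⟨w', hperm, hw'⟩
    obtain ⟨qs, hinit, hreads, hacc⟩ := exists_blocks_of_mem_lang hk hw'
    have hwin : ∀ i, prefixMultiset (fun j => w' (k * i + j)) k = windowMultiset k w i :=
      kWinPerm_iff.1 hperm
    refine ⟨qs, hinit, fun i => ⟨fun j => w' (k * i + j), ?_, ?_⟩, fun n => ?_⟩
    · simpa using hwin i
    · simpa using hreads i
    · obtain ⟨i, hni, hi⟩ := hacc n
      exact ⟨i, hni, fun j => w' (k * i + j), by simpa using hwin i, by simpa using hi⟩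
  · rintro ⟨qs, hinit, hreads, hacc⟩
    choose us hus hreads' hacc' using fun i => (hreads i).exists_word_visiting_if_readsPermAcc
    simp only [card_windowMultiset] at hus hreads' hacc'
    have hblock : ∀ i, ∀ j < k, us i j = concatBlocks k us (k * i + j) :=
      fun i j hj => (concatBlocks_mul_add us i hj).symm
    refine ⟨concatBlocks k us, kWinPerm_iff.2 fun i => ?_, mem_lang_of_blocks hk qs hinit
      (fun i => (hreads' i).congr (hblock i)) fun n => ?_⟩
    · rw [windowMultiset, ← prefixMultiset_congr (hblock i), hus]
    · obtain ⟨i, hni, hi⟩ := hacc n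
      exact ⟨i, hni, (hacc' i hi).congr (hblock i)⟩

end BuchiAutomaton

section WindowAutomaton

open BuchiAutomaton

variable {k : ℕ}

noncomputable def countVector (m : {m : Multiset A // card m < k}) (a : A) : Fin k :=
  ⟨count a m.1, (count_le_card a m.1).trans_lt m.2⟩

lemma countVector_injective : Function.Injective (countVector (A := A) (k := k)) :=
  fun _ _ h => Subtype.ext <| Multiset.ext.2 fun a => congrArg Fin.val (congrFun h a)

noncomputable instance [Fintype A] : Fintype {m : Multiset A // card m < k} :=
  Fintype.ofInjective _ countVector_injective

lemma card_multiset_card_lt_le [Fintype A] :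
    Fintype.card {m : Multiset A // card m < k} ≤ k ^ Fintype.card A := by
  simpa using Fintype.card_le_of_injective _ (countVector_injective (A := A) (k := k))

/-- `inl (m, q)`: inside a window, having read the letters `m` since the window began in state `q`
of `M`; `inr q`: at a window boundary in state `q`, right after a window on which the guessed run
of `M` visited an accepting state. In both boundary cases the `progress` is `(0, q)`. -/
abbrev WindowState (M : BuchiAutomaton A) (k : ℕ) : Type :=
  {m : Multiset A // card m < k} × M.Q ⊕ M.Q

variable {M : BuchiAutomaton A}

def WindowState.progress : WindowState M k → Multiset A × M.Q
  | .inl (m, q) => (m.1, q)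
  | .inr q => (0, q)

def windowTargets (M : BuchiAutomaton A) (x : Multiset A) (q : M.Q) : Set (WindowState M k) :=
  {s | s.progress.1 = 0 ∧ M.ReadsPerm x q s.progress.2 ∧
    (s ∈ Set.range .inr → M.ReadsPermAcc x q s.progress.2)}

def emptyWindow (hk : 0 < k) : {m : Multiset A // card m < k} := ⟨0, by simpa using hk⟩

noncomputable abbrev windowAutomaton [Fintype A] (M : BuchiAutomaton A) (hk : 0 < k) :
    BuchiAutomaton A where
  Q := WindowState M k
  fin := inferInstance
  step s a := if h : card (a ::ₘ s.progress.1) < k then {.inl (⟨_, h⟩, s.progress.2)}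
    else windowTargets M (a ::ₘ s.progress.1) s.progress.2
  init := (fun q => .inl (emptyWindow hk, q)) '' M.init
  accept := Set.range .inr

variable [Fintype A] {hk : 0 < k}

lemma windowAutomaton_step_of_lt {s : WindowState M k} {a : A} {m : Multiset A} {q : M.Q}
    (hs : s.progress = (m, q)) (h : card (a ::ₘ m) < k) :
    (windowAutomaton M hk).step s a = {.inl (⟨a ::ₘ m, h⟩, q)} := by
  simp only [windowAutomaton, hs]
  exact dif_pos h

lemma windowAutomaton_step_of_card_eq {s : WindowState M k} {a : A} {m : Multiset A} {q : M.Q}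
    (hs : s.progress = (m, q)) (h : card (a ::ₘ m) = k) :
    (windowAutomaton M hk).step s a = windowTargets M (a ::ₘ m) q := by
  simp only [windowAutomaton, hs]
  exact dif_neg h.not_lt

lemma windowAutomaton_progress_of_isPath {u : ℕ → A} {σ : ℕ → WindowState M k} {q : M.Q}
    (h0 : (σ 0).progress = (0, q)) (hσ : (windowAutomaton M hk).IsPath u k σ) :
    ∀ n < k, (σ n).progress = (prefixMultiset u n, q) ∧
      (0 < n → σ n ∉ Set.range .inr) := by
  intro n
  induction n with
  | zero => exact fun _ => ⟨h0, by simp⟩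
  | succ n ih =>
    intro hn
    have hstep := hσ n (by omega)
    rw [windowAutomaton_step_of_lt (ih (by omega)).1 (by simpa using hn)] at hstep
    simp [Set.mem_singleton_iff.1 hstep, WindowState.progress, prefixMultiset_succ]

lemma windowAutomaton_reads_iff {u : ℕ → A} {s s' : WindowState M k} {q : M.Q}
    (hs : s.progress = (0, q)) :
    (windowAutomaton M hk).Reads u k s s' ↔ s' ∈ windowTargets M (prefixMultiset u k) q := by
  have hpred : k - 1 + 1 = k := Nat.sub_add_cancel hk
  constructor
  · rintro ⟨σ, hσ, rfl, rfl⟩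
    have hstep := hσ (k - 1) (by omega)
    rwa [windowAutomaton_step_of_card_eq (windowAutomaton_progress_of_isPath hs hσ (k - 1)
      (by omega)).1 (by simp [hpred]), ← prefixMultiset_succ, hpred] at hstep
  · intro hs'
    let σ : ℕ → WindowState M k := fun j =>
      if j = 0 then s else if h : j < k then .inl (⟨prefixMultiset u j, by simpa⟩, q) else s'
    have hprog : ∀ j < k, (σ j).progress = (prefixMultiset u j, q) := by
      intro j hj
      rcases Nat.eq_zero_or_pos j with rfl | hj0
      · simpa [σ] using hs
      · simp [σ, hj0.ne', hj, WindowState.progress]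
    refine ⟨σ, fun j hj => ?_, if_pos rfl,
      by simp only [σ, if_neg hk.ne', dif_neg (lt_irrefl k)]⟩
    rcases Nat.lt_or_ge (j + 1) k with hlt | hge
    · rw [windowAutomaton_step_of_lt (hprog j hj) (by simpa using hlt), Set.mem_singleton_iff]
      simp [σ, hlt, prefixMultiset_succ]
    · obtain rfl : k = j + 1 := by omega
      rw [windowAutomaton_step_of_card_eq (hprog j hj) (by simp), ← prefixMultiset_succ]
      simpa [σ] using hs'

lemma windowAutomaton_readsAcc_iff {u : ℕ → A} {s s' : WindowState M k} {q : M.Q}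
    (hs : s.progress = (0, q)) :
    (windowAutomaton M hk).ReadsAcc u k s s' ↔
      (windowAutomaton M hk).Reads u k s s' ∧ s' ∈ Set.range .inr := by
  constructor
  · rintro ⟨σ, hσ, rfl, rfl, j, hj, hacc⟩
    refine ⟨⟨σ, hσ, rfl, rfl⟩, ?_⟩
    obtain rfl : j + 1 = k := by
      by_contra hne
      exact (windowAutomaton_progress_of_isPath hs hσ (j + 1) (by omega)).2 (by omega) hacc
    exact hacc
  · rintro ⟨⟨σ, hσ, h0, rfl⟩, hacc⟩
    exact ⟨σ, hσ, h0, rfl, k - 1, by omega, by rwa [Nat.sub_add_cancel hk]⟩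

lemma windowAutomaton_mem_lang_iff {w : ℕ → A} :
    w ∈ (windowAutomaton M hk).lang ↔ M.AcceptsPermuted (windowMultiset k w) := by
  constructor
  · intro hw
    obtain ⟨ss, hinit, hreads, hacc⟩ := exists_blocks_of_mem_lang hk hw
    have hboundary : ∀ i, (ss i).progress = (0, (ss i).progress.2) := by
      intro i
      induction i with
      | zero =>
        obtain ⟨q, -, hq⟩ := hinit
        simp [← hq, WindowState.progress, emptyWindow]
      | succ i ih => exact Prod.ext ((windowAutomaton_reads_iff ih).1 (hreads i)).1 rfl
    refine ⟨fun i => (ss i).progress.2, ?_, fun i => ((windowAutomaton_reads_iff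
      (hboundary i)).1 (hreads i)).2.1, fun n => ?_⟩
    · obtain ⟨q, hq, hq'⟩ := hinit
      simpa [← hq', WindowState.progress] using hq
    · obtain ⟨i, hni, hi⟩ := hacc n
      obtain ⟨hr, hinr⟩ := (windowAutomaton_readsAcc_iff (hboundary i)).1 hi
      exact ⟨i, hni, ((windowAutomaton_reads_iff (hboundary i)).1 hr).2.2 hinr⟩
  · rintro ⟨qs, hinit, hreads, hacc⟩
    let ss : ℕ → WindowState M k
      | 0 => .inl (emptyWindow hk, qs 0)
      | i + 1 =>
        if M.ReadsPermAcc (windowMultiset k w i) (qs i) (qs (i + 1)) then .inr (qs (i + 1))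
        else .inl (emptyWindow hk, qs (i + 1))
    have hboundary : ∀ i, (ss i).progress = (0, qs i) := by
      rintro (_ | i)
      · rfl
      · by_cases h : M.ReadsPermAcc (windowMultiset k w i) (qs i) (qs (i + 1)) <;>
          simp [ss, h, WindowState.progress, emptyWindow]
    have hreads' : ∀ i,
        (windowAutomaton M hk).Reads (fun j => w (k * i + j)) k (ss i) (ss (i + 1)) := by
      intro i
      refine (windowAutomaton_reads_iff (hboundary i)).2 ⟨?_, ?_, fun hinr => ?_⟩
      · simp [hboundary]
      · simpa [hboundary, windowMultiset] using hreads i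
      · by_cases h : M.ReadsPermAcc (windowMultiset k w i) (qs i) (qs (i + 1))
        · simpa [hboundary, windowMultiset] using h
        · simp [ss, h] at hinr
    refine mem_lang_of_blocks hk ss ⟨qs 0, hinit, rfl⟩ hreads' fun n => ?_
    obtain ⟨i, hni, hi⟩ := hacc n
    refine ⟨i, hni, (windowAutomaton_readsAcc_iff (hboundary i)).2 ⟨hreads' i, ?_⟩⟩
    simp [ss, hi]

lemma card_windowAutomaton_le :
    Fintype.card (windowAutomaton M hk).Q ≤
      k ^ Fintype.card A * Fintype.card M.Q + Fintype.card M.Q := by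
  simp only [windowAutomaton, Fintype.card_sum, Fintype.card_prod]
  gcongr
  exact card_multiset_card_lt_le

end WindowAutomaton

/-- For every Büchi automaton `A` and `k ≥ 1`, the `k`-window jumping language
of `A` is recognized by a Büchi automaton with at most `k^{|Σ|}·n + n` states. -/
theorem kWinLang_buchi (A : Type) [Fintype A] (M : BuchiAutomaton A) (k : ℕ) (hk : 1 ≤ k) :
    ∃ B : BuchiAutomaton A,
      B.lang = KWinLang M k ∧
      Fintype.card B.Q ≤ k ^ Fintype.card A * Fintype.card M.Q + Fintype.card M.Q :=
  ⟨windowAutomaton M hk, Set.ext fun _ =>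
    windowAutomaton_mem_lang_iff.trans (BuchiAutomaton.mem_kWinLang_iff hk).symm,
    card_windowAutomaton_le⟩
end

section
/- Let ∪_m (S_m + m) and ∪_m (T_m + m) be oblivious masked unions over a finite alphabet Σ, i.e., for every mask m the sets S_m, T_m ⊆ ℕ^Σ are m-oblivious. Then (∪_m (S_m + m)) ∩ (∪_m (T_m + m)) = ∪_m ((S_m ∩ T_m) + m), where each union ranges over all masks m of Σ. -/
open scoped Classical

/-
A vector `x + m` remembers its mask: its `∞` coordinates are exactly those of `m`. Hence a
point `v` lying in `S_m + m` and in `T_{m'} + m'` forces `m = m'`, and then `v = x + m = y + m`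
with `x ∈ S_m`, `y ∈ T_m`; obliviousness of `T_m` moves `x` into `T_m` as well.
-/

theorem maskAdd_eq_top_iff {A : Type} (x : A → ℕ) (m : A → ℕ∞) (a : A) :
    maskAdd x m a = ⊤ ↔ m a = ⊤ := by
  simp [maskAdd]

theorem IsMask.eq_of_maskAdd_eq {A : Type} {m m' : A → ℕ∞} (hm : IsMask m) (hm' : IsMask m')
    {x y : A → ℕ} (h : maskAdd x m = maskAdd y m') : m = m' := by
  funext a
  have htop : m a = ⊤ ↔ m' a = ⊤ := by
    rw [← maskAdd_eq_top_iff x m, h, maskAdd_eq_top_iff]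
  rcases hm.1 a with h0 | h0 <;> rcases hm'.1 a with h0' | h0' <;> simp_all

theorem IsMask.eq_of_mem_maskAddSet {A : Type} {m m' : A → ℕ∞} (hm : IsMask m)
    (hm' : IsMask m') {S T : Set (A → ℕ)} {v : A → ℕ∞} (hS : v ∈ maskAddSet S m)
    (hT : v ∈ maskAddSet T m') : m = m' := by
  obtain ⟨x, -, rfl⟩ := hS
  obtain ⟨y, -, hy⟩ := hT
  exact hm.eq_of_maskAdd_eq hm' hy.symm

theorem MOblivious.maskAddSet_inter {A : Type} {m : A → ℕ∞} {T : Set (A → ℕ)}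
    (hT : MOblivious m T) (S : Set (A → ℕ)) :
    maskAddSet S m ∩ maskAddSet T m = maskAddSet (S ∩ T) m := by
  refine subset_antisymm ?_ (Set.image_inter_subset _ _ _)
  rintro _ ⟨⟨x, hxS, rfl⟩, y, hyT, hyx⟩
  exact ⟨x, ⟨hxS, (hT x y hyx.symm).mpr hyT⟩, rfl⟩

theorem oblivious_masked_inter_general (A : Type)
    (S T : (A → ℕ∞) → Set (A → ℕ))
    (hT : ∀ m, IsMask m → MOblivious m (T m)) :
    (⋃ m ∈ {m' : A → ℕ∞ | IsMask m'}, maskAddSet (S m) m) ∩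
        (⋃ m ∈ {m' : A → ℕ∞ | IsMask m'}, maskAddSet (T m) m) =
      ⋃ m ∈ {m' : A → ℕ∞ | IsMask m'}, maskAddSet (S m ∩ T m) m := by
  ext v
  simp only [Set.mem_inter_iff, Set.mem_iUnion₂, Set.mem_ofPred_eq]
  constructor
  · rintro ⟨⟨m, hm, hvS⟩, m', hm', hvT⟩
    obtain rfl := hm.eq_of_mem_maskAddSet hm' hvS hvT
    exact ⟨m, hm, (hT m hm).maskAddSet_inter (S m) ▸ ⟨hvS, hvT⟩⟩
  · rintro ⟨m, hm, hv⟩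
    rw [← (hT m hm).maskAddSet_inter (S m)] at hv
    exact ⟨⟨m, hm, hv.1⟩, m, hm, hv.2⟩

/-- Intersection of oblivious masked unions is obtained by intersecting
componentwise, mask by mask. -/
theorem oblivious_masked_inter (A : Type) [Fintype A]
    (S T : (A → ℕ∞) → Set (A → ℕ))
    (hS : ∀ m, IsMask m → MOblivious m (S m)) (hT : ∀ m, IsMask m → MOblivious m (T m)) :
    (⋃ m ∈ {m' : A → ℕ∞ | IsMask m'}, maskAddSet (S m) m) ∩
        (⋃ m ∈ {m' : A → ℕ∞ | IsMask m'}, maskAddSet (T m) m) =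
      ⋃ m ∈ {m' : A → ℕ∞ | IsMask m'}, maskAddSet (S m ∩ T m) m :=
  oblivious_masked_inter_general A S T hT
end
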